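/- arXiv:2203.02036 — 3 statements merged into one kernel-verified Lean document; each statement's English description precedes it below -/
import Mathlib

section
/- Let α be the inverse golden mean. For every fixed integer v > 2, the set of positive periodic rotation numbers of the form (w + uα)/v with u, v, w integers, gcd(u,v,w)=1, and |u/v − (w/v)α| ≤ 1/2, is a discrete subset of ℝ (has no accumulation point). -/
/-!
Writing `ρ = (w + uα)/v`, the two conditions `|ρ| ≤ 1/2` and `|u/v - (w/v)α| ≤ 1/2` say that
`(w + uα, u - wα)` lies in the square of side `|v|` about the origin. The linear map
`(u, w) ↦ (w + uα, u - wα)` is invertible for every real `α` (its determinant is `-(1 + α²)`),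
so only finitely many integer pairs `(u, w)` qualify: the set of rotation numbers is finite,
and a finite set has no accumulation point.
-/

theorem abs_le_two_mul_of_abs_add_mul_le {α a b C : ℝ} (h₁ : |a + b * α| ≤ C)
    (h₂ : |b - a * α| ≤ C) : |b| ≤ 2 * C := by
  have hC : 0 ≤ C := (abs_nonneg _).trans h₁
  have hpos : 0 < 1 + α ^ 2 := by positivity
  have hbound : |b| * (1 + α ^ 2) ≤ (1 + |α|) * C := calc
    |b| * (1 + α ^ 2) = |α * (a + b * α) + (b - a * α)| := by
      rw [← abs_of_pos hpos, ← abs_mul]; ring_nf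
    _ ≤ |α| * |a + b * α| + |b - a * α| := by rw [← abs_mul]; exact abs_add_le _ _
    _ ≤ (1 + |α|) * C := by nlinarith [abs_nonneg α]
  -- `2t² - t + 1` has no real root.
  have hcoef : 1 + |α| ≤ 2 * (1 + α ^ 2) := by nlinarith [sq_abs α, sq_nonneg (|α| - 1 / 4)]
  exact le_of_mul_le_mul_right (hbound.trans (by nlinarith)) hpos

theorem finite_setOf_abs_le_half_div_add_div_mul (α : ℝ) {v : ℤ} (hv : v ≠ 0) :
    {ρ : ℝ | |ρ| ≤ 1 / 2 ∧ ∃ u w : ℤ, ρ = (w : ℝ) / v + (u : ℝ) / v * α ∧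
      |(u : ℝ) / v - (w : ℝ) / v * α| ≤ 1 / 2}.Finite := by
  have hvR : (v : ℝ) ≠ 0 := Int.cast_ne_zero.mpr hv
  refine (((Set.finite_Icc (-|v|) |v|).prod (Set.finite_Icc (-|v|) |v|)).image
    fun p : ℤ × ℤ => (p.2 : ℝ) / v + (p.1 : ℝ) / v * α).subset ?_
  rintro ρ ⟨hρ, u, w, rfl, hdiff⟩
  have hplus : |(w : ℝ) + u * α| ≤ |(v : ℝ)| / 2 := by
    rw [show (w : ℝ) + u * α = ((w : ℝ) / v + (u : ℝ) / v * α) * v by field_simp, abs_mul]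
    nlinarith [abs_nonneg (v : ℝ)]
  have hminus : |(u : ℝ) - w * α| ≤ |(v : ℝ)| / 2 := by
    rw [show (u : ℝ) - w * α = ((u : ℝ) / v - (w : ℝ) / v * α) * v by field_simp, abs_mul]
    nlinarith [abs_nonneg (v : ℝ)]
  have hu : |(u : ℝ)| ≤ |(v : ℝ)| := by
    linarith [abs_le_two_mul_of_abs_add_mul_le hplus hminus]
  have hw : |(w : ℝ)| ≤ |(v : ℝ)| := by
    have h₁ : |-(u : ℝ) + w * α| ≤ |(v : ℝ)| / 2 := by
      rw [← abs_neg]; convert hminus using 2; ring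
    have h₂ : |(w : ℝ) - -(u : ℝ) * α| ≤ |(v : ℝ)| / 2 := by
      convert hplus using 2; ring
    linarith [abs_le_two_mul_of_abs_add_mul_le h₁ h₂]
  exact ⟨(u, w), ⟨abs_le.mp (by exact_mod_cast hu), abs_le.mp (by exact_mod_cast hw)⟩, rfl⟩

theorem positive_periodic_discrete_general (α : ℝ) (v : ℤ) (hv : 2 < v) :
    ∀ x : ℝ, ¬ AccPt x (Filter.principal
      {ρ : ℝ | ρ ∈ Set.Icc (0 : ℝ) (1 / 2) ∧ ∃ u w : ℤ,
        ρ = (w : ℝ) / v + (u : ℝ) / v * α ∧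
        Int.gcd u (Int.gcd v w : ℤ) = 1 ∧
        |(u : ℝ) / v - (w : ℝ) / v * α| ≤ 1 / 2}) := by
  intro x hx
  have hv₀ : v ≠ 0 := by omega
  refine Set.Infinite.of_accPt hx
    ((finite_setOf_abs_le_half_div_add_div_mul α hv₀).subset ?_)
  rintro ρ ⟨⟨hρ₀, hρ₁⟩, u, w, hρ, -, hdiff⟩
  exact ⟨abs_le.mpr ⟨by linarith, hρ₁⟩, u, w, hρ, hdiff⟩

/-- For `α = (√5−1)/2` and each fixed integer `v > 2`, the set of positive periodic
rotation numbers `ρ = w/v + (u/v)α ∈ [0,1/2]` with `gcd(u,v,w) = 1` and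
`|u/v − (w/v)α| ≤ 1/2` has no accumulation point in `ℝ`. -/
theorem positive_periodic_discrete (α : ℝ) (hα : α = (Real.sqrt 5 - 1) / 2)
    (v : ℤ) (hv : 2 < v) :
    ∀ x : ℝ, ¬ AccPt x (Filter.principal
      {ρ : ℝ | ρ ∈ Set.Icc (0 : ℝ) (1 / 2) ∧ ∃ u w : ℤ,
        ρ = (w : ℝ) / v + (u : ℝ) / v * α ∧
        Int.gcd u (Int.gcd v w : ℤ) = 1 ∧
        |(u : ℝ) / v - (w : ℝ) / v * α| ≤ 1 / 2}) :=
  positive_periodic_discrete_general α v hv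
end

section
/- Let α = (√5 − 1)/2 and q_k = p_{k+1} with p_k Fibonacci. For every n ≥ 1, the orbit {ρ + jα mod 1 : |j| ≤ (q_{3n}−1)/2} of length q_{3n} centered at ρ has all gaps between consecutive points (on the circle ℝ/ℤ) equal to either α^{3n−1} or α^{3n}. -/
/-!
Since `α² = 1 - α`, one step of the continued-fraction map of `α` gives
`aα - b = -α (bα - (a - b))`; iterating it `k` times writes every `dα - p` with `d, p ∈ ℤ` as
`(-α)^k (aα - b)` with `d = F_{k+1} a + F_k b` (`F = Nat.fib`). If `|d| < F_{k+2}` and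
`0 < dα - p < α^k`, then `0 < |aα - b| < 1` and `|F_{k+1} a + F_k b| < F_{k+1} + F_k` force
`b = 0`, `a = ±1`: the only index difference in the window of `F_{3n+1}` points that produces a
gap shorter than `α^{3n-1}` is `(-1)^{3n-1} F_{3n}`, and its gap is `α^{3n}`. If that step
leaves the window from `j`, then, the window having odd length `F_{3n+1} = F_{3n-1} + F_{3n}`, the
step `-(-1)^{3n-1} F_{3n-1}` stays in it and produces the gap `α^{3n-1}`.
-/

theorem Nat.odd_fib_three_mul_add_one (n : ℕ) : Odd (Nat.fib (3 * n + 1)) := by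
  have h := Nat.fib_gcd (3 * n + 1) 3
  rw [show Nat.gcd (3 * n + 1) 3 = 1 by simp [Nat.gcd_comm], show Nat.fib 3 = 2 from rfl] at h
  exact Nat.coprime_two_right.mp h.symm

theorem Int.cast_le_neg_one_or_eq_zero_or_one_le {R : Type*} [Ring R] [LinearOrder R]
    [IsStrictOrderedRing R] (z : ℤ) : (z : R) ≤ -1 ∨ z = 0 ∨ 1 ≤ (z : R) := by
  rcases lt_trichotomy z 0 with h | h | h
  · exact Or.inl (by exact_mod_cast Int.le_sub_one_of_lt h)
  · exact Or.inr (Or.inl h)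
  · exact Or.inr (Or.inr (by exact_mod_cast h))

theorem two_mul_abs_sub_le_of_not_two_mul_abs_add_le {F a b j ε : ℤ} (hF : F = a + b)
    (hodd : Odd F) (ha : 0 ≤ a) (hb : 0 ≤ b) (hε : ε = 1 ∨ ε = -1) (hj : 2 * |j| ≤ F - 1)
    (h : ¬ 2 * |j + ε * b| ≤ F - 1) : 2 * |j - ε * a| ≤ F - 1 := by
  obtain ⟨r, rfl⟩ := hodd
  rcases hε with rfl | rfl <;> grind

theorem AddCircle.coe_eq_coe_iff_exists_int {p u v : ℝ} :
    (u : AddCircle p) = v ↔ ∃ w : ℤ, u = v + w * p := by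
  rw [← sub_eq_zero, ← AddCircle.coe_sub, AddCircle.coe_eq_zero_iff]
  simp only [zsmul_eq_mul]
  constructor
  · rintro ⟨w, hw⟩; exact ⟨w, by linarith⟩
  · rintro ⟨w, hw⟩; exact ⟨w, by linarith⟩

def centeredOrbit (α ρ : ℝ) (N : ℕ) : Set (AddCircle (1 : ℝ)) :=
  {y | ∃ j : ℤ, 2 * |j| ≤ (N : ℤ) - 1 ∧ y = ((ρ + j * α : ℝ) : AddCircle (1 : ℝ))}

noncomputable def gapAfter (T : Set (AddCircle (1 : ℝ))) (y : AddCircle (1 : ℝ)) : ℝ :=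
  sInf {d : ℝ | 0 < d ∧ y + (d : AddCircle (1 : ℝ)) ∈ T}

section CenteredOrbit

variable {α ρ : ℝ} {N : ℕ} {j : ℤ}

theorem coe_add_coe_mem_centeredOrbit_iff {x : ℝ} :
    ((ρ + j * α : ℝ) : AddCircle (1 : ℝ)) + (x : AddCircle (1 : ℝ)) ∈ centeredOrbit α ρ N ↔
      ∃ i w : ℤ, 2 * |i| ≤ (N : ℤ) - 1 ∧ x = (i - j) * α + w := by
  simp only [centeredOrbit, Set.mem_ofPred_eq, ← AddCircle.coe_add,
    AddCircle.coe_eq_coe_iff_exists_int, mul_one]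
  constructor
  · rintro ⟨i, hi, w, hw⟩; exact ⟨i, w, hi, by linarith⟩
  · rintro ⟨i, w, hi, hx⟩; exact ⟨i, hi, w, by rw [hx]; ring⟩

theorem gapAfter_centeredOrbit_eq {g : ℝ}
    (h : IsLeast {x : ℝ | 0 < x ∧ ∃ i w : ℤ, 2 * |i| ≤ (N : ℤ) - 1 ∧ x = (i - j) * α + w} g) :
    gapAfter (centeredOrbit α ρ N) ((ρ + j * α : ℝ) : AddCircle (1 : ℝ)) = g := by
  simp only [gapAfter, coe_add_coe_mem_centeredOrbit_iff]
  exact h.csInf_eq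

end CenteredOrbit

section GoldenConj

variable {α : ℝ}

theorem fib_succ_mul_sub_fib (hsq : α ^ 2 = 1 - α) (k : ℕ) :
    (Nat.fib (k + 1) : ℝ) * α - Nat.fib k = (-α) ^ k * α := by
  induction k with
  | zero => simp
  | succ k ih =>
    rw [Nat.fib_add_two, pow_succ]
    push_cast
    linear_combination (-α) * ih + (Nat.fib (k + 1) : ℝ) * hsq

theorem neg_one_pow_mul_fib_succ_sub (hsq : α ^ 2 = 1 - α) (k : ℕ) :
    ((-1) ^ k * Nat.fib (k + 1) : ℤ) * α - ((-1) ^ k * Nat.fib k : ℤ) = α ^ (k + 1) := by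
  have h := fib_succ_mul_sub_fib hsq k
  push_cast
  rcases k.even_or_odd with hk | hk <;> rw [hk.neg_pow] at h <;> rw [hk.neg_one_pow]
  · linear_combination h
  · linear_combination -h

theorem exists_fib_decomposition (hsq : α ^ 2 = 1 - α) (k : ℕ) (d p : ℤ) :
    ∃ a b : ℤ, d = Nat.fib (k + 1) * a + Nat.fib k * b ∧ d * α - p = (-α) ^ k * (a * α - b) := by
  induction k with
  | zero => exact ⟨d, p, by simp, by simp⟩
  | succ k ih =>
    obtain ⟨a, b, hd, hv⟩ := ih
    refine ⟨b, a - b, ?_, ?_⟩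
    · rw [hd, Nat.fib_add_two]; push_cast; ring
    · rw [hv, pow_succ]; push_cast; linear_combination (-α) ^ k * b * hsq

/-- If `a` and `b` had the same sign, `|c a + e b|` would be too large; if they had opposite
signs, `|aα - b|` would be. -/
theorem eq_zero_and_eq_one_or_eq_neg_one_of_abs_lt (hα : 1 / 2 < α) {c e a b : ℤ} (hc : 1 ≤ c)
    (he : 0 ≤ e) (hd : |c * a + e * b| < c + e) (hv : |a * α - b| < 1) (hv0 : a * α - b ≠ 0) :
    b = 0 ∧ (a = 1 ∨ a = -1) := by
  have hc' : (1 : ℝ) ≤ c := by exact_mod_cast hc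
  have he' : (0 : ℝ) ≤ e := by exact_mod_cast he
  have hd' : |(c : ℝ) * a + e * b| < c + e := by exact_mod_cast hd
  rw [abs_lt] at hd' hv
  rcases a.cast_le_neg_one_or_eq_zero_or_one_le (R := ℝ) with ha | rfl | ha <;>
    rcases b.cast_le_neg_one_or_eq_zero_or_one_le (R := ℝ) with hb | rfl | hb <;>
    simp only [Int.cast_zero, zero_mul, mul_zero, sub_zero, zero_sub, add_zero, zero_add, true_and,
      ne_eq, not_true_eq_false] at hd' hv hv0 ⊢
  all_goals first | (exfalso; nlinarith) | skip
  · have : (-2 : ℝ) < a := by nlinarith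
    norm_cast at ha this
    omega
  · have : (a : ℝ) < 2 := by nlinarith
    norm_cast at ha this
    omega

theorem eq_fib_of_pos_of_lt_pow (hsq : α ^ 2 = 1 - α) (hα : 1 / 2 < α) {k : ℕ} {d p : ℤ}
    (hd : |d| < Nat.fib (k + 2)) (hpos : 0 < d * α - p) (hlt : d * α - p < α ^ k) :
    d = (-1) ^ k * Nat.fib (k + 1) ∧ d * α - p = α ^ (k + 1) := by
  obtain ⟨a, b, rfl, hv⟩ := exists_fib_decomposition hsq k d p
  have hαk : 0 < α ^ k := pow_pos (by linarith) k
  have hv1 : |a * α - b| < 1 := by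
    have h : |(-α) ^ k * (a * α - b)| < α ^ k := by rwa [← hv, abs_of_pos hpos]
    rwa [abs_mul, abs_pow, abs_neg, abs_of_pos (by linarith), mul_lt_iff_lt_one_right hαk] at h
  have hv0 : a * α - b ≠ 0 := by
    rintro h
    rw [hv, h, mul_zero] at hpos
    exact lt_irrefl 0 hpos
  rw [Nat.fib_add_two, Nat.cast_add, add_comm (Nat.fib k : ℤ)] at hd
  obtain ⟨rfl, ha⟩ := eq_zero_and_eq_one_or_eq_neg_one_of_abs_lt hα
    (by exact_mod_cast Nat.fib_pos.mpr k.succ_pos) (Nat.cast_nonneg _) hd hv1 hv0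
  rw [hv] at hpos ⊢
  rcases k.even_or_odd with hk | hk <;> rcases ha with rfl | rfl <;>
    simp only [hk.neg_pow, one_pow, Int.cast_one, Int.cast_neg, Int.cast_zero] at hpos ⊢
  · exact ⟨by ring, by ring⟩
  · exact absurd hpos (by nlinarith)
  · exact absurd hpos (by nlinarith)
  · exact ⟨by ring, by ring⟩

theorem eq_add_fib_of_lt_pow (hsq : α ^ 2 = 1 - α) (hα : 1 / 2 < α) {k : ℕ} {i j w : ℤ}
    (hi : 2 * |i| ≤ (Nat.fib (k + 2) : ℤ) - 1) (hj : 2 * |j| ≤ (Nat.fib (k + 2) : ℤ) - 1)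
    (hpos : 0 < ((i : ℝ) - j) * α + w) (hlt : ((i : ℝ) - j) * α + w < α ^ k) :
    i = j + (-1) ^ k * Nat.fib (k + 1) ∧ ((i : ℝ) - j) * α + w = α ^ (k + 1) := by
  have hd : |i - j| < Nat.fib (k + 2) := by linarith [abs_sub i j]
  have h := eq_fib_of_pos_of_lt_pow hsq hα (p := -w) hd (by push_cast; linarith)
    (by push_cast; linarith)
  push_cast at h
  exact ⟨by linarith [h.1], by linarith [h.2]⟩

theorem gapAfter_centeredOrbit (hsq : α ^ 2 = 1 - α) (hα : 1 / 2 < α) {m : ℕ}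
    (hodd : Odd (Nat.fib (m + 3))) (ρ : ℝ) {j : ℤ} (hj : 2 * |j| ≤ (Nat.fib (m + 3) : ℤ) - 1) :
    gapAfter (centeredOrbit α ρ (Nat.fib (m + 3))) ((ρ + j * α : ℝ) : AddCircle (1 : ℝ)) =
        α ^ (m + 1) ∨
      gapAfter (centeredOrbit α ρ (Nat.fib (m + 3))) ((ρ + j * α : ℝ) : AddCircle (1 : ℝ)) =
        α ^ (m + 2) := by
  have hαm : α ^ (m + 2) < α ^ (m + 1) :=
    pow_lt_pow_right_of_lt_one₀ (by linarith) (by nlinarith) (by omega)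
  by_cases hs : 2 * |j + (-1) ^ (m + 1) * Nat.fib (m + 2)| ≤ (Nat.fib (m + 3) : ℤ) - 1
  · right
    refine gapAfter_centeredOrbit_eq
      ⟨⟨pow_pos (by linarith) _, _, -((-1) ^ (m + 1) * Nat.fib (m + 1)), hs, ?_⟩, ?_⟩
    · rw [← neg_one_pow_mul_fib_succ_sub hsq (m + 1)]; push_cast; ring
    · rintro x ⟨hx, i, w, hi, rfl⟩
      by_contra! hlt
      exact hlt.ne (eq_add_fib_of_lt_pow hsq hα hi hj hx (hlt.trans hαm)).2
  · left
    have hl := two_mul_abs_sub_le_of_not_two_mul_abs_add_le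
      (a := Nat.fib (m + 1)) (b := Nat.fib (m + 2))
      (by rw [show m + 3 = m + 1 + 2 from rfl, Nat.fib_add_two]; push_cast; ring)
      ((Int.odd_coe_nat _).mpr hodd) (by positivity) (by positivity) (neg_one_pow_eq_or ℤ _) hj hs
    refine gapAfter_centeredOrbit_eq
      ⟨⟨pow_pos (by linarith) _, _, -((-1) ^ m * Nat.fib m), hl, ?_⟩, ?_⟩
    · rw [← neg_one_pow_mul_fib_succ_sub hsq m]; push_cast; ring
    · rintro x ⟨hx, i, w, hi, rfl⟩
      by_contra! hlt
      exact hs ((eq_add_fib_of_lt_pow hsq hα hi hj hx hlt).1 ▸ hi)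

end GoldenConj

/-- Let `α = (√5−1)/2`, `p_k = fib k`, `q_k = p_{k+1}`. For `n ≥ 1` and any `ρ`, the
orbit `{ρ + jα mod 1 : |j| ≤ (q_{3n}−1)/2}` of length `q_{3n}` on the circle `ℝ/ℤ`
has every gap to the next point equal to `α^(3n−1)` or `α^(3n)`. -/
theorem orbit_gaps_two_values (α : ℝ) (hα : α = (Real.sqrt 5 - 1) / 2)
    (n : ℕ) (hn : 1 ≤ n) (ρ : ℝ) (T : Set (AddCircle (1 : ℝ)))
    (hT : T = {y : AddCircle (1 : ℝ) | ∃ j : ℤ,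
      2 * |j| ≤ (Nat.fib (3 * n + 1) : ℤ) - 1 ∧ y = ((ρ + j * α : ℝ) : AddCircle (1 : ℝ))}) :
    ∀ y ∈ T,
      sInf {d : ℝ | 0 < d ∧ y + ((d : ℝ) : AddCircle (1 : ℝ)) ∈ T} = α ^ (3 * n - 1) ∨
      sInf {d : ℝ | 0 < d ∧ y + ((d : ℝ) : AddCircle (1 : ℝ)) ∈ T} = α ^ (3 * n) := by
  have h5 : Real.sqrt 5 ^ 2 = 5 := Real.sq_sqrt (by norm_num)
  have hsq : α ^ 2 = 1 - α := by rw [hα]; linear_combination h5 / 4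
  have hhalf : 1 / 2 < α := by rw [hα]; nlinarith [Real.sqrt_nonneg 5]
  obtain ⟨m, hm⟩ : ∃ m, 3 * n = m + 2 := ⟨3 * n - 2, by omega⟩
  have hodd : Odd (Nat.fib (m + 3)) := by
    rw [← show 3 * n + 1 = m + 3 by omega]
    exact Nat.odd_fib_three_mul_add_one n
  rw [show 3 * n + 1 = m + 3 by omega] at hT
  rw [show 3 * n - 1 = m + 1 by omega, hm]
  subst hT
  rintro _ ⟨j, hj, rfl⟩
  exact gapAfter_centeredOrbit hsq hhalf hodd ρ hj
end

section
/- Three-gap theorem: for any irrational α ∈ (0,1) and any N ≥ 1, the points {jα mod 1 : 0 ≤ j < N} partition the circle ℝ/ℤ into arcs whose lengths take at most three distinct values, and if there are three values then the largest is the sum of the other two. -/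
/-!
Let `arcLength α m ∈ (0, 1]` be the length of the positive arc from `0` to `mα`. Seen from `jα`,
the gap to the next point is the least `arcLength α m` over the window `m ∈ [-j, N - 1 - j]`.
Let `a` minimise `arcLength α` on `[0, N - 1]` and `c` on `[-(N - 1), 0]`. As
`arcLength α (m + n)` is `arcLength α m + arcLength α n` or that minus `1`, the gap is
`arcLength α a` if the window contains `a`, `arcLength α c` if it contains `c`, and otherwise
`arcLength α a + arcLength α c`, attained at `a + c`.
-/

open Set

section toIocMod

variable {p : ℝ} (hp : 0 < p)

theorem toIocMod_add_eq_or (x y : ℝ) :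
    toIocMod hp 0 (x + y) = toIocMod hp 0 x + toIocMod hp 0 y ∨
      toIocMod hp 0 (x + y) = toIocMod hp 0 x + toIocMod hp 0 y - p := by
  have hx := toIocMod_mem_Ioc hp 0 x
  have hy := toIocMod_mem_Ioc hp 0 y
  have hmod : toIocMod hp 0 (x + y) = toIocMod hp 0 (toIocMod hp 0 x + toIocMod hp 0 y) := by
    rw [toIocMod_eq_toIocMod]
    refine ⟨-toIocDiv hp 0 x - toIocDiv hp 0 y, ?_⟩
    rw [← self_sub_toIocDiv_zsmul hp 0 x, ← self_sub_toIocDiv_zsmul hp 0 y]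
    simp only [zsmul_eq_mul]; push_cast; ring
  simp only [mem_Ioc, zero_add] at hx hy
  rcases le_or_gt (toIocMod hp 0 x + toIocMod hp 0 y) p with h | h
  · left
    rw [hmod, toIocMod_eq_self, zero_add]
    exact ⟨by linarith, h⟩
  · right
    rw [hmod, ← toIocMod_sub, toIocMod_eq_self, zero_add]
    exact ⟨by linarith, by linarith⟩

theorem toIocMod_add_le_of_le_left {x y : ℝ} (h : toIocMod hp 0 (x + y) ≤ toIocMod hp 0 x) :
    toIocMod hp 0 (x + y) ≤ toIocMod hp 0 y := by
  have hy : 0 < toIocMod hp 0 y := left_lt_toIocMod hp 0 y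
  have hx : toIocMod hp 0 x ≤ p := (toIocMod_le_right hp 0 x).trans_eq (zero_add p)
  rcases toIocMod_add_eq_or hp x y with h' | h' <;> linarith

theorem toIocMod_add_eq_add_of_le {x y : ℝ} (hy : toIocMod hp 0 y < p)
    (h : toIocMod hp 0 x ≤ toIocMod hp 0 (x + y)) :
    toIocMod hp 0 (x + y) = toIocMod hp 0 x + toIocMod hp 0 y :=
  (toIocMod_add_eq_or hp x y).resolve_right fun h' => by linarith

theorem isLeast_toIocMod (x : ℝ) :
    IsLeast {d : ℝ | 0 < d ∧ (d : AddCircle p) = x} (toIocMod hp 0 x) := by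
  refine ⟨⟨left_lt_toIocMod hp 0 x, ?_⟩, fun d ⟨hd, hdx⟩ => ?_⟩
  · rw [QuotientAddGroup.eq_iff_sub_mem, toIocMod_sub_self]
    exact AddSubgroup.zsmul_mem_zmultiples _ _
  · have hmod : toIocMod hp 0 d = toIocMod hp 0 x := by
      simpa using congrArg (fun z => (QuotientAddGroup.equivIocMod hp 0 z : ℝ)) hdx
    rw [← hmod]
    rcases le_or_gt d p with h | h
    · rw [(toIocMod_eq_self hp).2 ⟨hd, by simpa using h⟩]
    · exact (toIocMod_le_right hp 0 d).trans (by simpa using h.le)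

end toIocMod

/-- The length of the positive arc of `ℝ/ℤ` from `0` to `m * α`, taken in `(0, 1]`: a full turn
when `m * α ∈ ℤ`. -/
noncomputable def arcLength (α : ℝ) (m : ℤ) : ℝ :=
  toIocMod one_pos 0 (m * α)

namespace arcLength

variable {α : ℝ}

theorem pos (m : ℤ) : 0 < arcLength α m :=
  left_lt_toIocMod _ _ _

theorem lt_one (hα : Irrational α) {m : ℤ} (hm : m ≠ 0) : arcLength α m < 1 := by
  have hle : arcLength α m ≤ 1 := (toIocMod_le_right one_pos 0 _).trans_eq (zero_add 1)
  refine hle.lt_of_ne fun h => ?_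
  have hmod : (0 : ℝ) ≡ m * α [PMOD 1] :=
    (AddCommGroup.modEq_iff_toIocMod_eq_right one_pos).2 (h.trans (zero_add 1).symm)
  obtain ⟨z, hz⟩ := AddCommGroup.modEq_iff_eq_add_zsmul.1 hmod
  exact (hα.intCast_mul hm).ne_int z (by simpa using hz)

theorem add_le_of_le_left {m n : ℤ} (h : arcLength α (m + n) ≤ arcLength α m) :
    arcLength α (m + n) ≤ arcLength α n := by
  simp only [arcLength, Int.cast_add, add_mul] at h ⊢
  exact toIocMod_add_le_of_le_left one_pos h

theorem add_eq_add_of_le (hα : Irrational α) {m n : ℤ} (hn : n ≠ 0)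
    (h : arcLength α m ≤ arcLength α (m + n)) :
    arcLength α (m + n) = arcLength α m + arcLength α n := by
  simp only [arcLength, Int.cast_add, add_mul] at h ⊢
  exact toIocMod_add_eq_add_of_le one_pos (lt_one hα hn) h

theorem eq_add_of_forall_le (hα : Irrational α) {S : Set ℤ} {a m : ℤ}
    (ha : ∀ s ∈ S, arcLength α a ≤ arcLength α s) (hm : m ∈ S) (hma : m ≠ a) :
    arcLength α m = arcLength α a + arcLength α (m - a) := by
  have key := add_eq_add_of_le hα (sub_ne_zero.2 hma) (by rw [add_sub_cancel]; exact ha m hm)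
  rwa [add_sub_cancel] at key

theorem isLeast_image_of_cover {S W : Set ℤ} {e : ℤ} (he : e ∈ W)
    (hmin : ∀ s ∈ S, arcLength α e ≤ arcLength α s) (hcover : ∀ m ∈ W, m ∈ S ∨ e - m ∈ S) :
    IsLeast (arcLength α '' W) (arcLength α e) := by
  refine ⟨mem_image_of_mem _ he, forall_mem_image.2 fun m hm => ?_⟩
  rcases hcover m hm with hmS | hmS
  · exact hmin m hmS
  · have key := add_le_of_le_left (m := e - m) (n := m) (by rw [sub_add_cancel]; exact hmin _ hmS)
    rwa [sub_add_cancel] at key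

theorem isLeast_image_add (hα : Irrational α) {S S' W : Set ℤ} {a c : ℤ}
    (ha : ∀ s ∈ S, arcLength α a ≤ arcLength α s) (hc : ∀ s ∈ S', arcLength α c ≤ arcLength α s)
    (hac : a + c ∈ W)
    (hcover : ∀ m ∈ W, (m ∈ S ∧ m ≠ a ∧ m - a ∈ S') ∨ (m ∈ S' ∧ m ≠ c ∧ m - c ∈ S)) :
    IsLeast (arcLength α '' W) (arcLength α a + arcLength α c) := by
  refine ⟨⟨a + c, hac, ?_⟩, forall_mem_image.2 fun m hm => ?_⟩
  · rcases hcover _ hac with ⟨hS, hne, -⟩ | ⟨hS', hne, -⟩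
    · rw [eq_add_of_forall_le hα ha hS hne, add_sub_cancel_left]
    · rw [eq_add_of_forall_le hα hc hS' hne, add_sub_cancel_right, add_comm]
  · rcases hcover m hm with ⟨hS, hne, hS'⟩ | ⟨hS', hne, hS⟩
    · rw [eq_add_of_forall_le hα ha hS hne]
      exact (add_le_add_iff_left _).2 (hc _ hS')
    · rw [eq_add_of_forall_le hα hc hS' hne, add_comm]
      exact (add_le_add_iff_left _).2 (ha _ hS)

theorem exists_isLeast_image_Icc (hα : Irrational α) (n : ℕ) :
    ∃ g₁ g₂ : ℝ, 0 < g₁ ∧ 0 < g₂ ∧ ∀ i l : ℕ, i + l = n →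
      ∃ g ∈ ({g₁, g₂, g₁ + g₂} : Set ℝ), IsLeast (arcLength α '' Icc (-(i : ℤ)) l) g := by
  obtain ⟨a, ha, hamin⟩ := Finset.exists_min_image (Finset.Icc (0 : ℤ) n) (arcLength α)
    ⟨0, by simp⟩
  obtain ⟨c, hc, hcmin⟩ := Finset.exists_min_image (Finset.Icc (-(n : ℤ)) 0) (arcLength α)
    ⟨0, by simp⟩
  simp only [Finset.mem_Icc] at ha hc hamin hcmin
  refine ⟨arcLength α a, arcLength α c, pos a, pos c, fun i l hil => ?_⟩
  by_cases hal : a ≤ l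
  · refine ⟨_, Or.inl rfl, isLeast_image_of_cover (S := Icc 0 n) ⟨by omega, hal⟩
      hamin fun m hm => ?_⟩
    simp only [mem_Icc] at hm ⊢
    omega
  by_cases hci : -(i : ℤ) ≤ c
  · refine ⟨_, Or.inr (Or.inl rfl), isLeast_image_of_cover (S := Icc (-(n : ℤ)) 0)
      ⟨hci, by omega⟩ hcmin fun m hm => ?_⟩
    simp only [mem_Icc] at hm ⊢
    omega
  · refine ⟨_, Or.inr (Or.inr rfl), isLeast_image_add hα (S := Icc 0 n) (S' := Icc (-(n : ℤ)) 0)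
      hamin hcmin ?_ fun m hm => ?_⟩
    · simp only [mem_Icc]
      omega
    · simp only [mem_Icc] at hm ⊢
      omega

end arcLength

theorem isLeast_gap_of_isLeast_arcLength {α : ℝ} {N j l : ℕ} (hN : j + l + 1 = N) {g : ℝ}
    (hg : IsLeast (arcLength α '' Icc (-(j : ℤ)) l) g) :
    IsLeast {d : ℝ | 0 < d ∧ ((j * α : ℝ) : AddCircle (1 : ℝ)) + (d : AddCircle (1 : ℝ)) ∈
      {y : AddCircle (1 : ℝ) | ∃ k : ℕ, k < N ∧ y = ((k * α : ℝ) : AddCircle (1 : ℝ))}} g := by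
  obtain ⟨⟨e, he, rfl⟩, hlow⟩ := hg
  simp only [mem_Icc] at he
  obtain ⟨⟨hpos, hcoe⟩, -⟩ := isLeast_toIocMod one_pos ((e : ℝ) * α)
  refine ⟨⟨hpos, (j + e).toNat, by omega, ?_⟩, fun d ⟨hd, k, hk, hdk⟩ => ?_⟩
  · have hcast : ((j + e).toNat : ℝ) = j + e := by
      exact_mod_cast Int.toNat_of_nonneg (by omega)
    rw [arcLength, hcoe, ← AddCircle.coe_add, hcast, add_mul]
  · have hm : (k : ℤ) - j ∈ Icc (-(j : ℤ)) l := by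
      simp only [mem_Icc]
      omega
    refine (hlow (mem_image_of_mem _ hm)).trans ((isLeast_toIocMod one_pos _).2 ⟨hd, ?_⟩)
    rw [Int.cast_sub, Int.cast_natCast, Int.cast_natCast, sub_mul, AddCircle.coe_sub, ← hdk]
    abel

theorem three_gap_general (α : ℝ) (hirr : Irrational α)
    (N : ℕ) (T : Set (AddCircle (1 : ℝ)))
    (hT : T = {y : AddCircle (1 : ℝ) | ∃ j : ℕ,
      j < N ∧ y = ((j * α : ℝ) : AddCircle (1 : ℝ))}) :
    ∃ g₁ g₂ : ℝ, 0 < g₁ ∧ 0 < g₂ ∧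
      ∀ y ∈ T,
        sInf {d : ℝ | 0 < d ∧ y + ((d : ℝ) : AddCircle (1 : ℝ)) ∈ T}
          ∈ ({g₁, g₂, g₁ + g₂} : Set ℝ) := by
  obtain ⟨g₁, g₂, hg₁, hg₂, hwindow⟩ := arcLength.exists_isLeast_image_Icc hirr (N - 1)
  refine ⟨g₁, g₂, hg₁, hg₂, ?_⟩
  subst hT
  rintro _ ⟨j, hj, rfl⟩
  obtain ⟨g, hg, hleast⟩ := hwindow j (N - 1 - j) (by omega)
  rwa [(isLeast_gap_of_isLeast_arcLength (by omega) hleast).csInf_eq]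

/-- Three-gap theorem: for irrational `α ∈ (0,1)` and `N ≥ 1`, the gaps to the next
point among `{jα mod 1 : 0 ≤ j < N}` on the circle `ℝ/ℤ` take at most three distinct
values, and if there are three then the largest is the sum of the other two. -/
theorem three_gap (α : ℝ) (hirr : Irrational α) (hα0 : 0 < α) (hα1 : α < 1)
    (N : ℕ) (hN : 1 ≤ N) (T : Set (AddCircle (1 : ℝ)))
    (hT : T = {y : AddCircle (1 : ℝ) | ∃ j : ℕ,
      j < N ∧ y = ((j * α : ℝ) : AddCircle (1 : ℝ))}) :
    ∃ g₁ g₂ : ℝ, 0 < g₁ ∧ 0 < g₂ ∧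
      ∀ y ∈ T,
        sInf {d : ℝ | 0 < d ∧ y + ((d : ℝ) : AddCircle (1 : ℝ)) ∈ T}
          ∈ ({g₁, g₂, g₁ + g₂} : Set ℝ) :=
  three_gap_general α hirr N T hT
end
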